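/- arXiv:2504.10970 — 3 statements merged into one kernel-verified Lean document; each statement's English description precedes it below -/
import Mathlib

section
/- For all real numbers a > 0, b ≥ 0 and β ≥ 0, one has (a+βb)²·log((a+βb)²) − a²·log(a²) − 2βab·log(a²) ≤ (8/e)·β²·a^{1/2}·b² + (8/e)·β^{5/2}·b^{5/2} + 2βab + 6β²b². -/
/-!
Put `c = β b`. Since `log (x ^ 2) = 2 log x`, the left-hand side equals
`2 (a² + 2ac) (log (a + c) - log a) + 2 c² log (a + c)`.
The first term is at most `2ac + 4c²` because `log (a + c) - log a ≤ c / a`; the second is at most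
`(4 / e) c² (√a + √c)` because `log x ≤ 2 √x / e` and `√(a + c) ≤ √a + √c`.
-/

open Real

lemma Real.log_le_rpow_div_mul_exp_one {x ε : ℝ} (hx : 0 ≤ x) (hε : 0 < ε) :
    log x ≤ x ^ ε / (ε * exp 1) := by
  rcases hx.eq_or_lt with rfl | hx
  · simp [zero_rpow hε.ne']
  -- `e y ≤ exp y` at `y = ε log x`
  have h : exp 1 * (ε * log x) ≤ x ^ ε := by
    simpa [rpow_def_of_pos hx, mul_comm] using exp_one_mul_le_exp (x := ε * log x)
  rw [le_div_iff₀ (by positivity)]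
  linarith

lemma Real.log_add_sub_log_le {a c : ℝ} (ha : 0 < a) (hac : 0 < a + c) :
    log (a + c) - log a ≤ c / a := by
  have h := log_le_sub_one_of_pos (div_pos hac ha)
  rwa [log_div hac.ne' ha.ne', add_div, div_self ha.ne', add_sub_cancel_left] at h

lemma sq_mul_log_sq_add_sub_eq (a c : ℝ) :
    (a + c) ^ 2 * log ((a + c) ^ 2) - a ^ 2 * log (a ^ 2) - 2 * a * c * log (a ^ 2)
      = 2 * (a ^ 2 + 2 * a * c) * (log (a + c) - log a) + 2 * c ^ 2 * log (a + c) := by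
  simp only [log_pow]
  push_cast
  ring

lemma sq_mul_log_sq_add_sub_le {a c : ℝ} (ha : 0 < a) (hc : 0 ≤ c) :
    (a + c) ^ 2 * log ((a + c) ^ 2) - a ^ 2 * log (a ^ 2) - 2 * a * c * log (a ^ 2)
      ≤ 4 / exp 1 * c ^ 2 * (a ^ (1 / 2 : ℝ) + c ^ (1 / 2 : ℝ)) + 2 * a * c + 4 * c ^ 2 := by
  have hac : 0 < a + c := by positivity
  have hdiff : 2 * (a ^ 2 + 2 * a * c) * (log (a + c) - log a) ≤ 2 * a * c + 4 * c ^ 2 :=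
    calc 2 * (a ^ 2 + 2 * a * c) * (log (a + c) - log a)
        ≤ 2 * (a ^ 2 + 2 * a * c) * (c / a) := by
          gcongr
          exact log_add_sub_log_le ha hac
      _ = 2 * a * c + 4 * c ^ 2 := by field_simp; ring
  have hlog : 2 * c ^ 2 * log (a + c) ≤ 4 / exp 1 * c ^ 2 * (a ^ (1 / 2 : ℝ) + c ^ (1 / 2 : ℝ)) :=
    calc 2 * c ^ 2 * log (a + c)
        ≤ 2 * c ^ 2 * ((a + c) ^ (1 / 2 : ℝ) / (1 / 2 * exp 1)) := by
          gcongr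
          exact log_le_rpow_div_mul_exp_one hac.le one_half_pos
      _ ≤ 2 * c ^ 2 * ((a ^ (1 / 2 : ℝ) + c ^ (1 / 2 : ℝ)) / (1 / 2 * exp 1)) := by
          gcongr
          exact rpow_add_le_add_rpow ha.le hc one_half_pos.le one_half_lt_one.le
      _ = 4 / exp 1 * c ^ 2 * (a ^ (1 / 2 : ℝ) + c ^ (1 / 2 : ℝ)) := by field_simp; ring
  rw [sq_mul_log_sq_add_sub_eq]
  linarith

lemma Real.sq_mul_rpow_half {c : ℝ} (hc : 0 ≤ c) :
    c ^ 2 * c ^ (1 / 2 : ℝ) = c ^ (5 / 2 : ℝ) := by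
  rw [← rpow_natCast, ← rpow_add' hc (by norm_num)]
  norm_num

theorem stmt_4 (a b β : ℝ) (ha : 0 < a) (hb : 0 ≤ b) (hβ : 0 ≤ β) :
    (a + β * b) ^ 2 * Real.log ((a + β * b) ^ 2) - a ^ 2 * Real.log (a ^ 2)
        - 2 * β * a * b * Real.log (a ^ 2)
      ≤ (8 / Real.exp 1) * β ^ 2 * a ^ ((1 : ℝ) / 2) * b ^ 2
        + (8 / Real.exp 1) * β ^ ((5 : ℝ) / 2) * b ^ ((5 : ℝ) / 2)
        + 2 * β * a * b + 6 * β ^ 2 * b ^ 2 := by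
  have hc : 0 ≤ β * b := mul_nonneg hβ hb
  have hbound := sq_mul_log_sq_add_sub_le ha hc
  have hsplit : 4 / exp 1 * (β * b) ^ 2 * (a ^ (1 / 2 : ℝ) + (β * b) ^ (1 / 2 : ℝ))
      = 4 / exp 1 * (β ^ 2 * a ^ (1 / 2 : ℝ) * b ^ 2)
        + 4 / exp 1 * (β ^ (5 / 2 : ℝ) * b ^ (5 / 2 : ℝ)) := by
    rw [← mul_rpow hβ hb, ← sq_mul_rpow_half hc]
    ring
  have hsqrt_nonneg : 0 ≤ 4 / exp 1 * (β ^ 2 * a ^ (1 / 2 : ℝ) * b ^ 2) := by positivity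
  have hpow_nonneg : 0 ≤ 4 / exp 1 * (β ^ (5 / 2 : ℝ) * b ^ (5 / 2 : ℝ)) := by positivity
  -- `linarith` sees `8 / exp 1` and `4 / exp 1` as unrelated atoms
  rw [show (8 : ℝ) / exp 1 = 2 * (4 / exp 1) by ring]
  linarith [sq_nonneg (β * b)]
end

section
/- Let δ be a real number with 0 < δ ≤ 1/2. Then for all real numbers a > 0, b ≥ 0 and β ≥ 0, one has (a+βb)²·log((a+βb)²) − a²·log(a²) − 2βab·log(a²) ≤ (2/(eδ))·β²·a^{2δ}·b² + (2/(eδ))·β^{2+2δ}·b^{2+2δ} + 2βab + 6β²b². -/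
/-! Put s = βb. When s ≤ a the left side equals (a+s)²·log((a+s)²/a²) + s²·log a², and when
a ≤ s it equals (a²+2as)·log((a+s)²/a²) + s²·log (a+s)² with log (a+s)² ≤ 2 + log s². The
log-ratio is at most 2s/a by log y ≤ y - 1, and the remaining s²·log of a square is absorbed
into a power through log x ≤ x^p/(e·p), which is e·t ≤ exp t for t = p·log x. -/

open Real

theorem Real.log_le_rpow_div_exp_one_mul {x p : ℝ} (hx : 0 < x) (hp : 0 < p) :
    log x ≤ x ^ p / (exp 1 * p) := by
  rw [le_div_iff₀ (by positivity), rpow_def_of_pos hx]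
  calc log x * (exp 1 * p) = exp 1 * (log x * p) := by ring
    _ ≤ exp (log x * p) := exp_one_mul_le_exp

theorem Real.log_sq_le_rpow_div {x δ : ℝ} (hx : 0 < x) (hδ : 0 < δ) :
    log (x ^ 2) ≤ x ^ (2 * δ) / (exp 1 * δ) := by
  have h := log_le_rpow_div_exp_one_mul (pow_pos hx 2) hδ
  rwa [← rpow_natCast_mul hx.le, Nat.cast_ofNat] at h

theorem Real.log_sq_sub_log_sq_le {a s : ℝ} (ha : 0 < a) (has : 0 < a + s) :
    log ((a + s) ^ 2) - log (a ^ 2) ≤ 2 * s / a := by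
  have h := log_le_sub_one_of_pos (div_pos has ha)
  rw [log_div has.ne' ha.ne', div_sub_one ha.ne', add_sub_cancel_left] at h
  simp only [log_pow, Nat.cast_ofNat]
  linarith [mul_div_assoc 2 s a]

theorem sq_mul_log_sq_add_le_of_le {a s : ℝ} (ha : 0 < a) (hs : 0 ≤ s) (hsa : s ≤ a) :
    (a + s) ^ 2 * log ((a + s) ^ 2) - a ^ 2 * log (a ^ 2) - 2 * a * s * log (a ^ 2)
      ≤ s ^ 2 * log (a ^ 2) + 2 * a * s + 6 * s ^ 2 := by
  have hlog := log_sq_sub_log_sq_le ha (by linarith : 0 < a + s)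
  have hquot : (a + s) ^ 2 * (2 * s / a) ≤ 2 * a * s + 6 * s ^ 2 := by
    rw [← mul_div_assoc, div_le_iff₀ ha]
    nlinarith [mul_nonneg (mul_nonneg hs hs) (sub_nonneg.mpr hsa)]
  calc (a + s) ^ 2 * log ((a + s) ^ 2) - a ^ 2 * log (a ^ 2) - 2 * a * s * log (a ^ 2)
      = (a + s) ^ 2 * (log ((a + s) ^ 2) - log (a ^ 2)) + s ^ 2 * log (a ^ 2) := by ring
    _ ≤ (a + s) ^ 2 * (2 * s / a) + s ^ 2 * log (a ^ 2) := by gcongr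
    _ ≤ s ^ 2 * log (a ^ 2) + 2 * a * s + 6 * s ^ 2 := by linarith

theorem sq_mul_log_sq_add_le_of_ge {a s : ℝ} (ha : 0 < a) (has : a ≤ s) :
    (a + s) ^ 2 * log ((a + s) ^ 2) - a ^ 2 * log (a ^ 2) - 2 * a * s * log (a ^ 2)
      ≤ s ^ 2 * log (s ^ 2) + 2 * a * s + 6 * s ^ 2 := by
  have hs : 0 < s := ha.trans_le has
  have hlog := log_sq_sub_log_sq_le ha (by linarith : 0 < a + s)
  have hquot : (a ^ 2 + 2 * a * s) * (2 * s / a) = 2 * a * s + 4 * s ^ 2 := by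
    field_simp
    ring
  have hlog_sum : log ((a + s) ^ 2) ≤ 2 + log (s ^ 2) := by
    have hlog2 : log 2 ≤ 1 := by linarith [log_le_sub_one_of_pos (two_pos : (0 : ℝ) < 2)]
    calc log ((a + s) ^ 2) ≤ log ((2 * s) ^ 2) := by gcongr; linarith
      _ = 2 * log 2 + log (s ^ 2) := by
        rw [mul_pow, log_mul (by positivity) (by positivity), log_pow, Nat.cast_ofNat]
      _ ≤ 2 + log (s ^ 2) := by linarith
  calc (a + s) ^ 2 * log ((a + s) ^ 2) - a ^ 2 * log (a ^ 2) - 2 * a * s * log (a ^ 2)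
      = (a ^ 2 + 2 * a * s) * (log ((a + s) ^ 2) - log (a ^ 2))
          + s ^ 2 * log ((a + s) ^ 2) := by ring
    _ ≤ (a ^ 2 + 2 * a * s) * (2 * s / a) + s ^ 2 * (2 + log (s ^ 2)) := by
      gcongr
    _ = s ^ 2 * log (s ^ 2) + 2 * a * s + 6 * s ^ 2 := by rw [hquot]; ring

theorem sq_mul_log_sq_add_le {δ a s : ℝ} (hδ : 0 < δ) (ha : 0 < a) (hs : 0 ≤ s) :
    (a + s) ^ 2 * log ((a + s) ^ 2) - a ^ 2 * log (a ^ 2) - 2 * a * s * log (a ^ 2)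
      ≤ s ^ 2 * a ^ (2 * δ) / (exp 1 * δ) + s ^ (2 + 2 * δ) / (exp 1 * δ)
        + 2 * a * s + 6 * s ^ 2 := by
  rcases le_total s a with hsa | has
  · have hlog : s ^ 2 * log (a ^ 2) ≤ s ^ 2 * a ^ (2 * δ) / (exp 1 * δ) := by
      rw [mul_div_assoc]
      exact mul_le_mul_of_nonneg_left (log_sq_le_rpow_div ha hδ) (sq_nonneg s)
    have : 0 ≤ s ^ (2 + 2 * δ) / (exp 1 * δ) := by positivity
    linarith [sq_mul_log_sq_add_le_of_le ha hs hsa]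
  · have hs : 0 < s := ha.trans_le has
    have hlog : s ^ 2 * log (s ^ 2) ≤ s ^ (2 + 2 * δ) / (exp 1 * δ) := by
      rw [rpow_add hs, rpow_two, mul_div_assoc]
      exact mul_le_mul_of_nonneg_left (log_sq_le_rpow_div hs hδ) (sq_nonneg s)
    have : 0 ≤ s ^ 2 * a ^ (2 * δ) / (exp 1 * δ) := by positivity
    linarith [sq_mul_log_sq_add_le_of_ge ha has]

theorem stmt_5_general (δ : ℝ) (hδ0 : 0 < δ)
    (a b β : ℝ) (ha : 0 < a) (hb : 0 ≤ b) (hβ : 0 ≤ β) :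
    (a + β * b) ^ 2 * Real.log ((a + β * b) ^ 2) - a ^ 2 * Real.log (a ^ 2)
        - 2 * β * a * b * Real.log (a ^ 2)
      ≤ (2 / (Real.exp 1 * δ)) * β ^ 2 * a ^ (2 * δ) * b ^ 2
        + (2 / (Real.exp 1 * δ)) * β ^ (2 + 2 * δ) * b ^ (2 + 2 * δ)
        + 2 * β * a * b + 6 * β ^ 2 * b ^ 2 := by
  have key := sq_mul_log_sq_add_le hδ0 ha (mul_nonneg hβ hb)
  rw [mul_rpow hβ hb] at key
  have hA : 0 ≤ (β * b) ^ 2 * a ^ (2 * δ) / (exp 1 * δ) := by positivity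
  have hB : 0 ≤ β ^ (2 + 2 * δ) * b ^ (2 + 2 * δ) / (exp 1 * δ) := by positivity
  calc _ = (a + β * b) ^ 2 * log ((a + β * b) ^ 2) - a ^ 2 * log (a ^ 2)
        - 2 * a * (β * b) * log (a ^ 2) := by ring
    _ ≤ (β * b) ^ 2 * a ^ (2 * δ) / (exp 1 * δ) + β ^ (2 + 2 * δ) * b ^ (2 + 2 * δ) / (exp 1 * δ)
        + 2 * a * (β * b) + 6 * (β * b) ^ 2 := key
    _ ≤ 2 * ((β * b) ^ 2 * a ^ (2 * δ) / (exp 1 * δ))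
        + 2 * (β ^ (2 + 2 * δ) * b ^ (2 + 2 * δ) / (exp 1 * δ))
        + 2 * a * (β * b) + 6 * (β * b) ^ 2 := by linarith
    _ = _ := by ring

theorem stmt_5 (δ : ℝ) (hδ0 : 0 < δ) (hδ1 : δ ≤ 1 / 2)
    (a b β : ℝ) (ha : 0 < a) (hb : 0 ≤ b) (hβ : 0 ≤ β) :
    (a + β * b) ^ 2 * Real.log ((a + β * b) ^ 2) - a ^ 2 * Real.log (a ^ 2)
        - 2 * β * a * b * Real.log (a ^ 2)
      ≤ (2 / (Real.exp 1 * δ)) * β ^ 2 * a ^ (2 * δ) * b ^ 2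
        + (2 / (Real.exp 1 * δ)) * β ^ (2 + 2 * δ) * b ^ (2 + 2 * δ)
        + 2 * β * a * b + 6 * β ^ 2 * b ^ 2 :=
  stmt_5_general δ hδ0 a b β ha hb hβ
end

section
/- Let p be a real number with p ≥ 3. Then for all real numbers a ≥ 0 and b ≥ 0, one has (a+b)^p ≥ a^p + b^p + p·a^{p−1}·b + p·a·b^{p−1}. -/
/-!
Differentiating `x ↦ (a + x) ^ q - x ^ q - q a ^ (q - 1) x` and using superadditivity of
`t ↦ t ^ (q - 1)` gives `a ^ q + b ^ q + q a ^ (q - 1) b ≤ (a + b) ^ q` for `q ≥ 2`. Splitting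
`(a + b) ^ p = a (a + b) ^ (p - 1) + b (a + b) ^ (p - 1)` and applying this with `q = p - 1` to
each summand, once with the roles of `a` and `b` exchanged, produces exactly the two cross terms.
-/

open Real Set

namespace Real

lemma mul_rpow_sub_one {x q : ℝ} (hx : 0 ≤ x) (hq : q ≠ 0) : x * x ^ (q - 1) = x ^ q := by
  rw [← rpow_one_add' hx (by simpa using hq), add_sub_cancel]

lemma hasDerivAt_add_rpow_sub_rpow_sub_mul {q : ℝ} (hq : 1 ≤ q) (a x : ℝ) :
    HasDerivAt (fun x ↦ (a + x) ^ q - x ^ q - q * a ^ (q - 1) * x)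
      (q * (a + x) ^ (q - 1) - q * x ^ (q - 1) - q * a ^ (q - 1)) x := by
  have hshift : HasDerivAt (fun x ↦ (a + x) ^ q) (q * (a + x) ^ (q - 1)) x := by
    simpa [Function.comp_def] using
      (hasDerivAt_rpow_const (Or.inr hq)).comp x ((hasDerivAt_id x).const_add a)
  exact (hshift.sub (hasDerivAt_rpow_const (Or.inr hq))).sub
    (by simpa using (hasDerivAt_id x).const_mul (q * a ^ (q - 1)))

lemma rpow_add_rpow_add_mul_rpow_sub_one_le {q a b : ℝ} (hq : 2 ≤ q) (ha : 0 ≤ a)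
    (hb : 0 ≤ b) :
    a ^ q + b ^ q + q * a ^ (q - 1) * b ≤ (a + b) ^ q := by
  set f : ℝ → ℝ := fun x ↦ (a + x) ^ q - x ^ q - q * a ^ (q - 1) * x
  have hderiv := hasDerivAt_add_rpow_sub_rpow_sub_mul (by linarith : (1 : ℝ) ≤ q) a
  have hmono : MonotoneOn f (Ici 0) := by
    refine monotoneOn_of_hasDerivWithinAt_nonneg (convex_Ici 0)
      (fun x _ ↦ (hderiv x).continuousAt.continuousWithinAt)
      (fun x _ ↦ (hderiv x).hasDerivWithinAt) fun x hx ↦ ?_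
    rw [interior_Ici] at hx
    have hsuper := add_rpow_le_rpow_add ha (le_of_lt hx) (by linarith : 1 ≤ q - 1)
    linarith [mul_le_mul_of_nonneg_left hsuper (by linarith : (0 : ℝ) ≤ q)]
  have hf0 : f 0 = a ^ q := by simp [f, zero_rpow (by positivity : q ≠ 0)]
  have hfb : f 0 ≤ f b := hmono self_mem_Ici hb hb
  simp only [hf0, f] at hfb
  linarith

end Real

theorem stmt_6 (p : ℝ) (hp : 3 ≤ p) (a b : ℝ) (ha : 0 ≤ a) (hb : 0 ≤ b) :
    (a + b) ^ p ≥ a ^ p + b ^ p + p * a ^ (p - 1) * b + p * a * b ^ (p - 1) := by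
  have hq : 2 ≤ p - 1 := by linarith
  have hp0 : p ≠ 0 := by positivity
  have hp1 : p - 1 ≠ 0 := by linarith
  have hsplit : (a + b) ^ p = a * (a + b) ^ (p - 1) + b * (a + b) ^ (p - 1) := by
    rw [← add_mul, mul_rpow_sub_one (by positivity) hp0]
  have hleft := mul_le_mul_of_nonneg_left (rpow_add_rpow_add_mul_rpow_sub_one_le hq ha hb) ha
  have hright := mul_le_mul_of_nonneg_left (rpow_add_rpow_add_mul_rpow_sub_one_le hq hb ha) hb
  rw [add_comm b a] at hright
  rw [hsplit, ge_iff_le]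
  linear_combination hleft + hright - mul_rpow_sub_one ha hp0 - mul_rpow_sub_one hb hp0
    - (p - 1) * b * mul_rpow_sub_one ha hp1 - (p - 1) * a * mul_rpow_sub_one hb hp1
end
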